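/- As n → ∞ the following three asymptotics hold: (i) w'(4n+3)/w(4n+3) − u''(4n+3)/(2 u'(4n+3)) = O(n^{−1}); (ii) w''(4n+3)/w(4n+3) − ( w'(4n+3)/w(4n+3) )² + π²/16 = O(n^{−1}); (iii) u'''(4n+3)/(3 u'(4n+3)) − ( u''(4n+3) )²/(4 (u'(4n+3))²) + π²/48 = O(n^{−1}). -/

import Mathlib

open Filter

/-- `u(λ) = ψ₊⁰(0,λ) = cos((λ-1)π/4) 2^{(λ-1)/4} Γ((λ+1)/4) / √π`. -/
noncomputable def ufun (x : ℝ) : ℝ :=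
  Real.cos ((x - 1) * Real.pi / 4) * (2 : ℝ) ^ ((x - 1) / 4) *
    Real.Gamma ((x + 1) / 4) / Real.sqrt Real.pi

/-- `w(λ) = (ψ₊⁰)'(0,λ) = sin((λ-1)π/4) 2^{(λ+3)/4} Γ((λ+3)/4) / √π`. -/
noncomputable def wfun (x : ℝ) : ℝ :=
  Real.sin ((x - 1) * Real.pi / 4) * (2 : ℝ) ^ ((x + 3) / 4) *
    Real.Gamma ((x + 3) / 4) / Real.sqrt Real.pi

open Real Set Topology


-- machinery
lemma evderiv {a : ℝ} {f D : ℝ → ℝ} (h : ∀ᶠ x in 𝓝 a, HasDerivAt f (D x) x) :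
    deriv f =ᶠ[𝓝 a] D := h.mono fun x hx => hx.deriv

lemma evtransfer {a : ℝ} {f g : ℝ → ℝ} {D : ℝ → ℝ} (hfg : f =ᶠ[𝓝 a] g)
    (h : ∀ᶠ x in 𝓝 a, HasDerivAt g (D x) x) : ∀ᶠ x in 𝓝 a, HasDerivAt f (D x) x := by
  have h2 : ∀ᶠ x in 𝓝 a, f =ᶠ[𝓝 x] g := hfg.eventually_nhds
  filter_upwards [h2, h] with x hx hD
  exact hD.congr_of_eventuallyEq hx


lemma contDiffAt_CGamma {s : ℂ} (hs : 0 < s.re) : ContDiffAt ℂ ⊤ Complex.Gamma s := by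
  have h : AnalyticOnNhd ℂ Complex.Gamma {s : ℂ | 0 < s.re} := by
    refine DifferentiableOn.analyticOnNhd (fun z hz => ?_) (isOpen_lt continuous_const Complex.continuous_re)
    refine (Complex.differentiableAt_Gamma z (fun m => ?_)).differentiableWithinAt
    intro h
    rw [h] at hz
    simp only [mem_setOf_eq, Complex.neg_re, Complex.natCast_re] at hz
    have : (0:ℝ) ≤ m := m.cast_nonneg
    linarith
  exact ((h s hs).contDiffAt).of_le le_top

lemma contDiffAt_RGamma {x : ℝ} (hx : 0 < x) : ContDiffAt ℝ ⊤ Real.Gamma x := by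
  have h1 : ContDiffAt ℝ ⊤ (fun y : ℝ => (Complex.Gamma y).re) x := by
    apply Complex.reCLM.contDiff.contDiffAt.comp
    exact ((contDiffAt_CGamma (by simpa using hx)).restrict_scalars ℝ).comp x
      Complex.ofRealCLM.contDiff.contDiffAt
  refine h1.congr_of_eventuallyEq (Eventually.of_forall fun y => ?_)
  simp only [Complex.Gamma_ofReal, Complex.ofReal_re]

noncomputable def Fl : ℝ → ℝ := fun x => Real.log (Real.Gamma x)
noncomputable def ps : ℝ → ℝ := deriv Fl
noncomputable def Tg : ℝ → ℝ := deriv ps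

lemma contDiffOn_Fl : ContDiffOn ℝ ⊤ Fl (Ioi 0) := by
  intro x hx
  refine ContDiffAt.contDiffWithinAt ?_
  exact (Real.contDiffAt_log.2 (Real.Gamma_pos_of_pos hx).ne').comp x (contDiffAt_RGamma hx)

lemma contDiffOn_ps : ContDiffOn ℝ ⊤ ps (Ioi 0) :=
  contDiffOn_Fl.deriv_of_isOpen isOpen_Ioi le_top

lemma contDiffOn_Tg : ContDiffOn ℝ ⊤ Tg (Ioi 0) :=
  contDiffOn_ps.deriv_of_isOpen isOpen_Ioi le_top

lemma diff_Fl {x : ℝ} (hx : 0 < x) : DifferentiableAt ℝ Fl x :=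
  ((contDiffOn_Fl x hx).contDiffAt (Ioi_mem_nhds hx)).differentiableAt (by simp)
lemma diff_ps {x : ℝ} (hx : 0 < x) : DifferentiableAt ℝ ps x :=
  ((contDiffOn_ps x hx).contDiffAt (Ioi_mem_nhds hx)).differentiableAt (by simp)
lemma diff_Tg {x : ℝ} (hx : 0 < x) : DifferentiableAt ℝ Tg x :=
  ((contDiffOn_Tg x hx).contDiffAt (Ioi_mem_nhds hx)).differentiableAt (by simp)

lemma hasDerivAt_Fl {x : ℝ} (hx : 0 < x) : HasDerivAt Fl (ps x) x := (diff_Fl hx).hasDerivAt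
lemma hasDerivAt_ps {x : ℝ} (hx : 0 < x) : HasDerivAt ps (Tg x) x := (diff_ps hx).hasDerivAt

lemma ps_rec {x : ℝ} (hx : 0 < x) : ps (x + 1) = ps x + x⁻¹ := by
  have h1 : HasDerivAt (fun y : ℝ => Fl (y + 1)) (ps (x + 1)) x := by
    simpa [Function.comp_def] using HasDerivAt.comp x (hasDerivAt_Fl (by simp only [id]; linarith)) ((hasDerivAt_id x).add_const 1)
  have h2 : HasDerivAt (fun y : ℝ => Fl y + Real.log y) (ps x + x⁻¹) x :=
    (hasDerivAt_Fl hx).add (Real.hasDerivAt_log hx.ne')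
  have h3 : HasDerivAt (fun y : ℝ => Fl (y + 1)) (ps x + x⁻¹) x := by
    refine h2.congr_of_eventuallyEq ?_
    filter_upwards [Ioi_mem_nhds hx] with y hy
    have hy' : (0:ℝ) < y := hy
    simp only [Fl, Real.Gamma_add_one hy'.ne']
    rw [Real.log_mul hy'.ne' (Real.Gamma_pos_of_pos hy').ne']
    ring
  exact h1.unique h3

lemma Tg_rec {x : ℝ} (hx : 0 < x) : Tg (x + 1) = Tg x - (x ^ 2)⁻¹ := by
  have h1 : HasDerivAt (fun y : ℝ => ps (y + 1)) (Tg (x + 1)) x := by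
    simpa [Function.comp_def] using HasDerivAt.comp x (hasDerivAt_ps (by simp only [id]; linarith)) ((hasDerivAt_id x).add_const 1)
  have h2 : HasDerivAt (fun y : ℝ => ps y + y⁻¹) (Tg x + -(x ^ 2)⁻¹) x := by
    exact (hasDerivAt_ps hx).add (hasDerivAt_inv hx.ne')
  have h3 : HasDerivAt (fun y : ℝ => ps (y + 1)) (Tg x + -(x ^ 2)⁻¹) x := by
    refine h2.congr_of_eventuallyEq ?_
    filter_upwards [Ioi_mem_nhds hx] with y hy
    exact ps_rec hy
  rw [h1.unique h3]; ring

lemma Fl_dup {x : ℝ} (hx : 0 < x) :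
    Fl x + Fl (x + 1/2) = Fl (2*x) + (1 - 2*x) * Real.log 2 + Real.log (Real.sqrt Real.pi) := by
  have h := Real.Gamma_mul_Gamma_add_half x
  have h1 : Real.log (Real.Gamma x * Real.Gamma (x + 1/2)) = Fl x + Fl (x + 1/2) :=
    Real.log_mul (Real.Gamma_pos_of_pos hx).ne' (Real.Gamma_pos_of_pos (by linarith)).ne'
  rw [← h1, h]
  rw [Real.log_mul (by positivity) (Real.sqrt_pos.mpr Real.pi_pos).ne',
    Real.log_mul (Real.Gamma_pos_of_pos (by linarith)).ne' (by positivity),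
    Real.log_rpow (by norm_num)]
  simp only [Fl]

lemma ps_dup {x : ℝ} (hx : 0 < x) :
    ps x + ps (x + 1/2) = 2 * ps (2*x) - 2 * Real.log 2 := by
  have h1 : HasDerivAt (fun y : ℝ => Fl y + Fl (y + 1/2)) (ps x + ps (x + 1/2)) x :=
    (hasDerivAt_Fl hx).add (by
      have h := HasDerivAt.comp x (hasDerivAt_Fl (by simp only [id]; linarith))
        ((hasDerivAt_id x).add_const (1/2))
      simp only [Function.comp_def, id, mul_one] at h; exact h)
  have h2 : HasDerivAt
      (fun y : ℝ => Fl (2*y) + (1 - 2*y) * Real.log 2 + Real.log (Real.sqrt Real.pi))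
      (ps (2*x) * 2 + -2 * Real.log 2) x := by
    have hin : HasDerivAt (fun y : ℝ => 2*y) 2 x := by simpa using (hasDerivAt_id x).const_mul 2
    have ha : HasDerivAt (fun y : ℝ => Fl (2*y)) (ps (2*x) * 2) x := by
      simpa [Function.comp_def] using
        HasDerivAt.comp x (hasDerivAt_Fl (show (0:ℝ) < 2*x by linarith)) hin
    have hb : HasDerivAt (fun y : ℝ => (1 - 2*y) * Real.log 2) (-2 * Real.log 2) x := by
      simpa using (((hasDerivAt_id x).const_mul 2).const_sub 1).mul_const (Real.log 2)
    exact (ha.add hb).add_const _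
  have h3 : HasDerivAt (fun y : ℝ => Fl y + Fl (y + 1/2)) (ps (2*x) * 2 + -2 * Real.log 2) x := by
    refine h2.congr_of_eventuallyEq ?_
    filter_upwards [Ioi_mem_nhds hx] with y hy
    exact Fl_dup hy
  rw [h1.unique h3]; ring

lemma Tg_dup {x : ℝ} (hx : 0 < x) :
    Tg x + Tg (x + 1/2) = 4 * Tg (2*x) := by
  have h1 : HasDerivAt (fun y : ℝ => ps y + ps (y + 1/2)) (Tg x + Tg (x + 1/2)) x :=
    (hasDerivAt_ps hx).add (by
      have h := HasDerivAt.comp x (hasDerivAt_ps (by simp only [id]; linarith))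
        ((hasDerivAt_id x).add_const (1/2))
      simp only [Function.comp_def, id, mul_one] at h; exact h)
  have h2 : HasDerivAt (fun y : ℝ => 2 * ps (2*y) - 2 * Real.log 2) (2 * (Tg (2*x) * 2)) x := by
    have hin : HasDerivAt (fun y : ℝ => 2*y) 2 x := by simpa using (hasDerivAt_id x).const_mul 2
    have ha : HasDerivAt (fun y : ℝ => ps (2*y)) (Tg (2*x) * 2) x := by
      simpa [Function.comp_def] using
        HasDerivAt.comp x (hasDerivAt_ps (show (0:ℝ) < 2*x by linarith)) hin
    simpa using (ha.const_mul 2).sub_const (2 * Real.log 2)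
  have h3 : HasDerivAt (fun y : ℝ => ps y + ps (y + 1/2)) (2 * (Tg (2*x) * 2)) x := by
    refine h2.congr_of_eventuallyEq ?_
    filter_upwards [Ioi_mem_nhds hx] with y hy
    exact ps_dup hy
  rw [h1.unique h3]; ring

lemma ps_mono : MonotoneOn ps (Ioi 0) := by
  have h := Real.convexOn_log_Gamma.monotoneOn_deriv (fun x hx => diff_Fl hx)
  have : Fl = Real.log ∘ Real.Gamma := rfl
  rwa [← this] at h

lemma Tg_nonneg {x : ℝ} (hx : 0 < x) : 0 ≤ Tg x := by
  have h : Tendsto (slope ps x) (𝓝[>] x) (𝓝 (Tg x)) :=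
    (hasDerivAt_iff_tendsto_slope.mp (hasDerivAt_ps hx)).mono_left
      (nhdsWithin_mono x fun y hy => ne_of_gt hy)
  refine ge_of_tendsto h ?_
  filter_upwards [self_mem_nhdsWithin] with y hy
  have hy' : x < y := hy
  rw [slope_def_field]
  apply div_nonneg _ (by linarith)
  have := ps_mono (mem_Ioi.mpr hx) (mem_Ioi.mpr (hx.trans hy')) hy'.le
  linarith


lemma Tg_step {x : ℝ} (hx : 0 < x) : Tg (x + 1) ≤ Tg x := by
  rw [Tg_rec hx]
  have : (0:ℝ) ≤ (x ^ 2)⁻¹ := by positivity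
  linarith

lemma Tg_add_nat_le {x : ℝ} (hx : 0 < x) (n : ℕ) : Tg (x + n) ≤ Tg x := by
  induction n with
  | zero => simp
  | succ k ih =>
    have h1 : Tg (x + k + 1) ≤ Tg (x + k) := Tg_step (by positivity)
    push_cast
    calc Tg (x + (k + 1)) = Tg (x + k + 1) := by ring_nf
    _ ≤ Tg (x + k) := h1
    _ ≤ Tg x := ih

lemma Tg_antitone_nat {x : ℝ} (hx : 0 < x) : Antitone (fun n : ℕ => Tg (x + n)) := by
  refine antitone_nat_of_succ_le fun n => ?_
  have := Tg_step (show (0:ℝ) < x + n by positivity)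
  calc Tg (x + (n+1 : ℕ)) = Tg ((x + n) + 1) := by push_cast; ring_nf
  _ ≤ Tg (x + n) := this

/-- bound for Tg on [1,∞) -/
lemma Tg_bounded : ∃ M : ℝ, ∀ x : ℝ, 1 ≤ x → Tg x ≤ M := by
  obtain ⟨M, hM⟩ := (isCompact_Icc (a := (1:ℝ)) (b := 2)).exists_bound_of_continuousOn
    ((contDiffOn_Tg.continuousOn).mono (fun y hy => lt_of_lt_of_le one_pos hy.1))
  refine ⟨M, fun x hx => ?_⟩
  set n : ℕ := ⌊x - 1⌋.toNat with hn
  have h0 : (0:ℤ) ≤ ⌊x - 1⌋ := Int.le_floor.mpr (by simpa using hx)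
  have hcast : (n : ℝ) = (⌊x - 1⌋ : ℝ) := by
    rw [hn]; exact_mod_cast Int.toNat_of_nonneg h0
  set y : ℝ := x - n with hy
  have hy1 : 1 ≤ y := by
    have := Int.floor_le (x - 1)
    rw [hy, hcast]; linarith
  have hy2 : y ≤ 2 := by
    have := Int.lt_floor_add_one (x - 1)
    rw [hy, hcast]; linarith
  have hxy : x = y + n := by rw [hy]; ring
  calc Tg x = Tg (y + n) := by rw [hxy]
  _ ≤ Tg y := Tg_add_nat_le (by linarith) n
  _ ≤ |Tg y| := le_abs_self _
  _ ≤ M := hM y ⟨hy1, hy2⟩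

noncomputable def Lf (x : ℝ) : ℝ := ⨅ n : ℕ, Tg (x + n)

lemma Lf_tendsto {x : ℝ} (hx : 0 < x) :
    Tendsto (fun n : ℕ => Tg (x + n)) atTop (𝓝 (Lf x)) :=
  tendsto_atTop_ciInf (Tg_antitone_nat hx) ⟨0, fun z ⟨n, hn⟩ => hn ▸ Tg_nonneg (by positivity)⟩

lemma Lf_nonneg {x : ℝ} (hx : 0 < x) : 0 ≤ Lf x :=
  le_ciInf fun n => Tg_nonneg (by positivity)

lemma Lf_le_Tg {x : ℝ} (hx : 0 < x) : Lf x ≤ Tg x := by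
  have := ciInf_le (f := fun n : ℕ => Tg (x + n))
    ⟨0, fun z ⟨n, hn⟩ => hn ▸ Tg_nonneg (by positivity)⟩ 0
  simpa [Lf] using this

lemma Lf_shift {x : ℝ} (hx : 0 < x) : Lf (x + 1) = Lf x := by
  have h1 : Tendsto (fun n : ℕ => Tg (x + 1 + n)) atTop (𝓝 (Lf x)) := by
    have h2 := (Lf_tendsto hx).comp (tendsto_add_atTop_nat 1)
    refine h2.congr fun n => ?_
    simp only [Function.comp]
    push_cast; ring_nf
  exact tendsto_nhds_unique (Lf_tendsto (by linarith)) h1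

lemma Lf_dup {x : ℝ} (hx : 0 < x) : Lf x + Lf (x + 1/2) = 4 * Lf (2 * x) := by
  have h1 : Tendsto (fun n : ℕ => Tg (x + n) + Tg (x + 1/2 + n)) atTop
      (𝓝 (Lf x + Lf (x + 1/2))) :=
    (Lf_tendsto hx).add (Lf_tendsto (by linarith))
  have h2 : Tendsto (fun n : ℕ => 4 * Tg (2 * x + n)) atTop (𝓝 (4 * Lf (2 * x))) :=
    (Lf_tendsto (by linarith)).const_mul 4
  have h3 : Tendsto (fun n : ℕ => 4 * Tg (2 * x + (2 * n : ℕ))) atTop (𝓝 (4 * Lf (2 * x))) := by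
    have := h2.comp (tendsto_atTop_mono (fun n : ℕ => Nat.le_mul_of_pos_left n two_pos) tendsto_id)
    exact h2.comp (Tendsto.comp (tendsto_id.const_mul_atTop' (by norm_num)) tendsto_id)
  have h4 : (fun n : ℕ => Tg (x + n) + Tg (x + 1/2 + n)) =
      fun n : ℕ => 4 * Tg (2 * x + (2 * n : ℕ)) := by
    funext n
    have := Tg_dup (show (0:ℝ) < x + n by positivity)
    push_cast
    push_cast at this
    calc Tg (x + n) + Tg (x + 1/2 + n) = Tg (x + n) + Tg ((x + n) + 1/2) := by ring_nf
    _ = 4 * Tg (2 * (x + n)) := this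
    _ = 4 * Tg (2 * x + 2 * n) := by ring_nf
  rw [h4] at h1
  exact tendsto_nhds_unique h1 h3

lemma Lf_zero {x : ℝ} (hx : 1 ≤ x) : Lf x = 0 := by
  obtain ⟨M, hM⟩ := Tg_bounded
  have hbdd : BddAbove (Lf '' Ici 1) := by
    refine ⟨M, fun z ⟨y, hy, hz⟩ => ?_⟩
    rw [← hz]
    exact (Lf_le_Tg (by linarith [mem_Ici.mp hy])).trans (hM y hy)
  set S := sSup (Lf '' Ici 1) with hS
  have hmem : ∀ y : ℝ, 1 ≤ y → Lf y ≤ S := fun y hy => le_csSup hbdd ⟨y, hy, rfl⟩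
  have hS0 : 0 ≤ S := le_trans (Lf_nonneg one_pos) (hmem 1 le_rfl)
  have hhalf : S ≤ S / 2 := by
    refine csSup_le ⟨Lf 1, ⟨1, by simp, rfl⟩⟩ ?_
    rintro z ⟨y, hy, rfl⟩
    have hy1 : (1:ℝ) ≤ y := hy
    -- Lf y = Lf (y+1) and y+1 = 2*((y+1)/2)
    have hx2 : (1:ℝ) ≤ (y + 1) / 2 := by linarith
    have hdup := Lf_dup (show (0:ℝ) < (y+1)/2 by linarith)
    have h2x : 2 * ((y+1)/2) = y + 1 := by ring
    rw [h2x] at hdup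
    have h1 := hmem _ hx2
    have h2 := hmem ((y+1)/2 + 1/2) (by linarith)
    have := Lf_shift (show (0:ℝ) < y by linarith)
    linarith
  have hSz : S = 0 := le_antisymm (by linarith) hS0
  exact le_antisymm (hSz ▸ hmem x hx) (Lf_nonneg (by linarith))

lemma Tg_le_aux {x : ℝ} (hx : 2 ≤ x) (n : ℕ) :
    Tg x ≤ Tg (x + n) + (x - 1)⁻¹ - (x + n - 1)⁻¹ := by
  induction n with
  | zero => simp
  | succ k ih =>
    have hxk : (0:ℝ) < x + k := by positivity
    have hxk1 : (0:ℝ) < x + k - 1 := by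
      have : (0:ℝ) ≤ (k:ℝ) := k.cast_nonneg
      linarith
    have hrec := Tg_rec hxk
    have hineq : ((x + k) ^ 2)⁻¹ ≤ (x + k - 1)⁻¹ - (x + k)⁻¹ := by
      rw [inv_sub_inv hxk1.ne' hxk.ne',
        show x + (k:ℝ) - (x + k - 1) = 1 from by ring, one_div]
      exact inv_anti₀ (mul_pos hxk1 hxk) (by nlinarith)
    have heq : x + (k+1 : ℕ) = (x + k) + 1 := by push_cast; ring
    rw [heq, hrec]
    push_cast
    have hsimp : x + (k:ℝ) + 1 - 1 = x + k := by ring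
    rw [hsimp]
    linarith

lemma Tg_le_inv {x : ℝ} (hx : 2 ≤ x) : Tg x ≤ (x - 1)⁻¹ := by
  have h : ∀ n : ℕ, Tg x - (x - 1)⁻¹ ≤ Tg (x + n) := by
    intro n
    have h1 := Tg_le_aux hx n
    have h2 : (0:ℝ) < x + n - 1 := by
      have : (0:ℝ) ≤ (n:ℝ) := n.cast_nonneg
      linarith
    have h3 : (0:ℝ) ≤ (x + n - 1)⁻¹ := by positivity
    linarith
  have h4 : Tg x - (x - 1)⁻¹ ≤ Lf x := le_ciInf h
  rw [Lf_zero (by linarith)] at h4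
  linarith

noncomputable def Gu : ℝ → ℝ :=
  fun x => (x-1)/4 * Real.log 2 + Fl ((x+1)/4) - Real.log (Real.sqrt Real.pi)
noncomputable def Eu : ℝ → ℝ := fun x => Real.exp (Gu x)
noncomputable def g1 : ℝ → ℝ := fun x => Real.log 2 / 4 + ps ((x+1)/4) / 4
noncomputable def g2 : ℝ → ℝ := fun x => Tg ((x+1)/4) / 16
noncomputable def g3 : ℝ → ℝ := fun x => deriv Tg ((x+1)/4) / 64

lemma ufun_eq {x : ℝ} (hx : -1 < x) : ufun x = Real.cos ((x - 1) * Real.pi / 4) * Eu x := by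
  have hq : (0:ℝ) < (x+1)/4 := by linarith
  unfold ufun Eu Gu Fl
  rw [Real.exp_sub, Real.exp_add, Real.exp_log (Real.Gamma_pos_of_pos hq),
    Real.exp_log (Real.sqrt_pos.mpr Real.pi_pos),
    show (2:ℝ) ^ ((x - 1) / 4) = Real.exp ((x-1)/4 * Real.log 2) by
      rw [Real.rpow_def_of_pos two_pos, mul_comm]]
  ring

lemma hin14 (x : ℝ) : HasDerivAt (fun y : ℝ => (y+1)/4) (1/4) x := by
  simpa using ((hasDerivAt_id x).add_const 1).div_const 4

lemma hGu {x : ℝ} (hx : -1 < x) : HasDerivAt Gu (g1 x) x := by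
  have hq : (0:ℝ) < (x+1)/4 := by linarith
  have h1 : HasDerivAt (fun y : ℝ => Fl ((y+1)/4)) (ps ((x+1)/4) * (1/4)) x := by
    simpa [Function.comp_def] using HasDerivAt.comp x (hasDerivAt_Fl hq) (hin14 x)
  have h2 : HasDerivAt (fun y : ℝ => (y-1)/4 * Real.log 2) (1/4 * Real.log 2) x := by
    simpa using (((hasDerivAt_id x).sub_const 1).div_const 4).mul_const (Real.log 2)
  have h3 := (h2.add h1).sub_const (Real.log (Real.sqrt Real.pi))
  refine HasDerivAt.congr_deriv h3 ?_
  unfold g1; ring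

lemma hg1 {x : ℝ} (hx : -1 < x) : HasDerivAt g1 (g2 x) x := by
  have hq : (0:ℝ) < (x+1)/4 := by linarith
  have h1 : HasDerivAt (fun y : ℝ => ps ((y+1)/4)) (Tg ((x+1)/4) * (1/4)) x := by
    simpa [Function.comp_def] using HasDerivAt.comp x (hasDerivAt_ps hq) (hin14 x)
  have := ((h1.div_const 4).const_add (Real.log 2 / 4))
  refine HasDerivAt.congr_deriv this ?_
  unfold g2; ring

lemma hg2 {x : ℝ} (hx : -1 < x) : HasDerivAt g2 (g3 x) x := by
  have hq : (0:ℝ) < (x+1)/4 := by linarith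
  have h1 : HasDerivAt (fun y : ℝ => Tg ((y+1)/4)) (deriv Tg ((x+1)/4) * (1/4)) x := by
    simpa [Function.comp_def] using HasDerivAt.comp x (diff_Tg hq).hasDerivAt (hin14 x)
  refine HasDerivAt.congr_deriv (h1.div_const 16) ?_
  unfold g3; ring

lemma hEu {x : ℝ} (hx : -1 < x) : HasDerivAt Eu (g1 x * Eu x) x := by
  have h1 : HasDerivAt Eu (Real.exp (Gu x) * g1 x) x := by
    exact HasDerivAt.comp x (Real.hasDerivAt_exp (Gu x)) (hGu hx)
  refine HasDerivAt.congr_deriv h1 ?_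
  unfold Eu; ring

noncomputable def U0 : ℝ → ℝ := fun x => Real.cos ((x - 1) * Real.pi / 4) * Eu x
noncomputable def U1 : ℝ → ℝ := fun x =>
  Eu x * (Real.cos ((x - 1) * Real.pi / 4) * g1 x - Real.pi/4 * Real.sin ((x - 1) * Real.pi / 4))
noncomputable def U2 : ℝ → ℝ := fun x =>
  Eu x * (Real.cos ((x - 1) * Real.pi / 4) * (g1 x ^ 2 + g2 x - (Real.pi/4)^2)
    - 2 * (Real.pi/4) * Real.sin ((x - 1) * Real.pi / 4) * g1 x)
noncomputable def U3 : ℝ → ℝ := fun x =>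
  Eu x * (g1 x * (Real.cos ((x - 1) * Real.pi / 4) * (g1 x ^ 2 + g2 x - (Real.pi/4)^2)
      - 2 * (Real.pi/4) * Real.sin ((x - 1) * Real.pi / 4) * g1 x)
    + (-(Real.pi/4) * Real.sin ((x - 1) * Real.pi / 4) * (g1 x ^ 2 + g2 x - (Real.pi/4)^2)
      + Real.cos ((x - 1) * Real.pi / 4) * (2 * g1 x * g2 x + g3 x)
      - 2 * (Real.pi/4) * ((Real.pi/4) * Real.cos ((x - 1) * Real.pi / 4) * g1 x
        + Real.sin ((x - 1) * Real.pi / 4) * g2 x)))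

lemma hth (x : ℝ) : HasDerivAt (fun y : ℝ => (y - 1) * Real.pi / 4) (Real.pi/4) x := by
  simpa using (((hasDerivAt_id x).sub_const 1).mul_const Real.pi).div_const 4

lemma hcos (x : ℝ) : HasDerivAt (fun y : ℝ => Real.cos ((y - 1) * Real.pi / 4))
    (-Real.sin ((x - 1) * Real.pi / 4) * (Real.pi/4)) x := by
  simpa [Function.comp_def] using
    HasDerivAt.comp x (Real.hasDerivAt_cos ((x - 1) * Real.pi / 4)) (hth x)

lemma hsin (x : ℝ) : HasDerivAt (fun y : ℝ => Real.sin ((y - 1) * Real.pi / 4))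
    (Real.cos ((x - 1) * Real.pi / 4) * (Real.pi/4)) x := by
  simpa [Function.comp_def] using
    HasDerivAt.comp x (Real.hasDerivAt_sin ((x - 1) * Real.pi / 4)) (hth x)

lemma hU0 {x : ℝ} (hx : -1 < x) : HasDerivAt U0 (U1 x) x := by
  refine HasDerivAt.congr_deriv ((hcos x).mul (hEu hx)) ?_
  unfold U1; ring

lemma hU1 {x : ℝ} (hx : -1 < x) : HasDerivAt U1 (U2 x) x := by
  have hinner : HasDerivAt
      (fun y : ℝ => Real.cos ((y - 1) * Real.pi / 4) * g1 y
        - Real.pi/4 * Real.sin ((y - 1) * Real.pi / 4))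
      ((-Real.sin ((x - 1) * Real.pi / 4) * (Real.pi/4)) * g1 x
        + Real.cos ((x - 1) * Real.pi / 4) * g2 x
        - Real.pi/4 * (Real.cos ((x - 1) * Real.pi / 4) * (Real.pi/4))) x :=
    ((hcos x).mul (hg1 hx)).sub ((hsin x).const_mul (Real.pi/4))
  refine HasDerivAt.congr_deriv ((hEu hx).mul hinner) ?_
  unfold U2; ring

lemma hU2 {x : ℝ} (hx : -1 < x) : HasDerivAt U2 (U3 x) x := by
  have hinner : HasDerivAt
      (fun y : ℝ => Real.cos ((y - 1) * Real.pi / 4) * (g1 y ^ 2 + g2 y - (Real.pi/4)^2)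
        - 2 * (Real.pi/4) * Real.sin ((y - 1) * Real.pi / 4) * g1 y)
      ((-Real.sin ((x - 1) * Real.pi / 4) * (Real.pi/4)) * (g1 x ^ 2 + g2 x - (Real.pi/4)^2)
        + Real.cos ((x - 1) * Real.pi / 4) * (2 * g1 x * g2 x + g3 x)
        - ((2 * (Real.pi/4) * (Real.cos ((x - 1) * Real.pi / 4) * (Real.pi/4))) * g1 x
          + (2 * (Real.pi/4) * Real.sin ((x - 1) * Real.pi / 4)) * g2 x)) x := by
    have ha : HasDerivAt (fun y : ℝ => g1 y ^ 2 + g2 y - (Real.pi/4)^2)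
        (2 * g1 x * g2 x + g3 x) x := by
      have := (((hg1 hx).pow 2).add (hg2 hx)).sub_const ((Real.pi/4)^2)
      refine HasDerivAt.congr_deriv this ?_; ring
    have hb := ((hcos x).mul ha)
    have hc := (((hsin x).const_mul (2 * (Real.pi/4))).mul (hg1 hx))
    refine HasDerivAt.congr_deriv (hb.sub hc) ?_; ring
  refine HasDerivAt.congr_deriv ((hEu hx).mul hinner) ?_
  unfold U3; ring

lemma cos_a (n : ℕ) : Real.cos ((4 * (n:ℝ) + 3 - 1) * Real.pi / 4) = 0 := by
  have h : (4 * (n:ℝ) + 3 - 1) * Real.pi / 4 = Real.pi/2 + n * Real.pi := by ring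
  rw [h, Real.cos_add, Real.cos_pi_div_two, Real.sin_pi_div_two, Real.sin_nat_mul_pi]
  ring

lemma sin_a (n : ℕ) : Real.sin ((4 * (n:ℝ) + 3 - 1) * Real.pi / 4) = (-1 : ℝ) ^ n := by
  have h : (4 * (n:ℝ) + 3 - 1) * Real.pi / 4 = Real.pi/2 + n * Real.pi := by ring
  rw [h, Real.sin_add, Real.cos_pi_div_two, Real.sin_pi_div_two, Real.sin_nat_mul_pi]
  have := Real.cos_nat_mul_pi_sub 0 n
  simp at this
  rw [this]; ring

lemma u_derivs (n : ℕ) :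
    deriv ufun (4*(n:ℝ)+3) = U1 (4*(n:ℝ)+3) ∧
    deriv (deriv ufun) (4*(n:ℝ)+3) = U2 (4*(n:ℝ)+3) ∧
    deriv (deriv (deriv ufun)) (4*(n:ℝ)+3) = U3 (4*(n:ℝ)+3) := by
  set a : ℝ := 4*(n:ℝ)+3 with ha
  have han : (-1:ℝ) < a := by have : (0:ℝ) ≤ (n:ℝ) := n.cast_nonneg; rw [ha]; linarith
  have hev : ∀ᶠ x in 𝓝 a, (-1:ℝ) < x := eventually_gt_nhds han
  have h0 : ufun =ᶠ[𝓝 a] U0 := hev.mono fun x hx => ufun_eq hx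
  have hev1 : ∀ᶠ x in 𝓝 a, HasDerivAt ufun (U1 x) x :=
    evtransfer h0 (hev.mono fun x hx => hU0 hx)
  have d1 : deriv ufun =ᶠ[𝓝 a] U1 := evderiv hev1
  have hev2 : ∀ᶠ x in 𝓝 a, HasDerivAt (deriv ufun) (U2 x) x :=
    evtransfer d1 (hev.mono fun x hx => hU1 hx)
  have d2 : deriv (deriv ufun) =ᶠ[𝓝 a] U2 := evderiv hev2
  have hev3 : ∀ᶠ x in 𝓝 a, HasDerivAt (deriv (deriv ufun)) (U3 x) x :=
    evtransfer d2 (hev.mono fun x hx => hU2 hx)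
  have d3 : deriv (deriv (deriv ufun)) =ᶠ[𝓝 a] U3 := evderiv hev3
  exact ⟨d1.eq_of_nhds, d2.eq_of_nhds, d3.eq_of_nhds⟩

lemma iii_val (n : ℕ) :
    deriv (deriv (deriv ufun)) (4*(n:ℝ)+3) / (3 * deriv ufun (4*(n:ℝ)+3))
      - (deriv (deriv ufun) (4*(n:ℝ)+3)) ^ 2 / (4 * (deriv ufun (4*(n:ℝ)+3)) ^ 2)
      + Real.pi ^ 2 / 48 = Tg ((n:ℝ)+1) / 16 := by
  obtain ⟨e1, e2, e3⟩ := u_derivs n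
  rw [e1, e2, e3]
  unfold U1 U2 U3
  rw [cos_a n, sin_a n]
  have harg : (4*(n:ℝ)+3+1)/4 = (n:ℝ)+1 := by ring
  have hE : Eu (4*(n:ℝ)+3) ≠ 0 := Real.exp_ne_zero _
  have hs : ((-1:ℝ))^n ≠ 0 := by
    rcases Nat.even_or_odd n with h | h
    · rw [h.neg_one_pow]; norm_num
    · rw [h.neg_one_pow]; norm_num
  have hg2 : g2 (4*(n:ℝ)+3) = Tg ((n:ℝ)+1) / 16 := by unfold g2; rw [harg]
  rw [← hg2]
  have hpi : Real.pi ≠ 0 := Real.pi_ne_zero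
  field_simp
  ring

noncomputable def Gw : ℝ → ℝ :=
  fun x => (x+3)/4 * Real.log 2 + Fl ((x+3)/4) - Real.log (Real.sqrt Real.pi)
noncomputable def Ew : ℝ → ℝ := fun x => Real.exp (Gw x)
noncomputable def p1 : ℝ → ℝ := fun x => Real.log 2 / 4 + ps ((x+3)/4) / 4
noncomputable def p2 : ℝ → ℝ := fun x => Tg ((x+3)/4) / 16

lemma wfun_eq {x : ℝ} (hx : -3 < x) : wfun x = Real.sin ((x - 1) * Real.pi / 4) * Ew x := by
  have hq : (0:ℝ) < (x+3)/4 := by linarith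
  unfold wfun Ew Gw Fl
  rw [Real.exp_sub, Real.exp_add, Real.exp_log (Real.Gamma_pos_of_pos hq),
    Real.exp_log (Real.sqrt_pos.mpr Real.pi_pos),
    show (2:ℝ) ^ ((x + 3) / 4) = Real.exp ((x+3)/4 * Real.log 2) by
      rw [Real.rpow_def_of_pos two_pos, mul_comm]]
  ring

lemma hin34 (x : ℝ) : HasDerivAt (fun y : ℝ => (y+3)/4) (1/4) x := by
  simpa using ((hasDerivAt_id x).add_const 3).div_const 4

lemma hGw {x : ℝ} (hx : -3 < x) : HasDerivAt Gw (p1 x) x := by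
  have hq : (0:ℝ) < (x+3)/4 := by linarith
  have h1 : HasDerivAt (fun y : ℝ => Fl ((y+3)/4)) (ps ((x+3)/4) * (1/4)) x := by
    simpa [Function.comp_def] using HasDerivAt.comp x (hasDerivAt_Fl hq) (hin34 x)
  have h2 : HasDerivAt (fun y : ℝ => (y+3)/4 * Real.log 2) (1/4 * Real.log 2) x := by
    simpa using (((hasDerivAt_id x).add_const 3).div_const 4).mul_const (Real.log 2)
  have h3 := (h2.add h1).sub_const (Real.log (Real.sqrt Real.pi))
  refine HasDerivAt.congr_deriv h3 ?_
  unfold p1; ring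

lemma hp1 {x : ℝ} (hx : -3 < x) : HasDerivAt p1 (p2 x) x := by
  have hq : (0:ℝ) < (x+3)/4 := by linarith
  have h1 : HasDerivAt (fun y : ℝ => ps ((y+3)/4)) (Tg ((x+3)/4) * (1/4)) x := by
    simpa [Function.comp_def] using HasDerivAt.comp x (hasDerivAt_ps hq) (hin34 x)
  refine HasDerivAt.congr_deriv ((h1.div_const 4).const_add (Real.log 2 / 4)) ?_
  unfold p2; ring

lemma hEw {x : ℝ} (hx : -3 < x) : HasDerivAt Ew (p1 x * Ew x) x := by
  have h1 : HasDerivAt Ew (Real.exp (Gw x) * p1 x) x := by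
    exact HasDerivAt.comp x (Real.hasDerivAt_exp (Gw x)) (hGw hx)
  refine HasDerivAt.congr_deriv h1 ?_
  unfold Ew; ring

noncomputable def W0 : ℝ → ℝ := fun x => Real.sin ((x - 1) * Real.pi / 4) * Ew x
noncomputable def W1 : ℝ → ℝ := fun x =>
  Ew x * (Real.sin ((x - 1) * Real.pi / 4) * p1 x + Real.pi/4 * Real.cos ((x - 1) * Real.pi / 4))
noncomputable def W2 : ℝ → ℝ := fun x =>
  Ew x * (Real.sin ((x - 1) * Real.pi / 4) * (p1 x ^ 2 + p2 x - (Real.pi/4)^2)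
    + 2 * (Real.pi/4) * Real.cos ((x - 1) * Real.pi / 4) * p1 x)

lemma hW0 {x : ℝ} (hx : -3 < x) : HasDerivAt W0 (W1 x) x := by
  refine HasDerivAt.congr_deriv ((hsin x).mul (hEw hx)) ?_
  unfold W1; ring

lemma hW1 {x : ℝ} (hx : -3 < x) : HasDerivAt W1 (W2 x) x := by
  have hinner : HasDerivAt
      (fun y : ℝ => Real.sin ((y - 1) * Real.pi / 4) * p1 y
        + Real.pi/4 * Real.cos ((y - 1) * Real.pi / 4))
      ((Real.cos ((x - 1) * Real.pi / 4) * (Real.pi/4)) * p1 x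
        + Real.sin ((x - 1) * Real.pi / 4) * p2 x
        + Real.pi/4 * (-Real.sin ((x - 1) * Real.pi / 4) * (Real.pi/4))) x :=
    ((hsin x).mul (hp1 hx)).add ((hcos x).const_mul (Real.pi/4))
  refine HasDerivAt.congr_deriv ((hEw hx).mul hinner) ?_
  unfold W2; ring

lemma w_derivs (n : ℕ) :
    deriv wfun (4*(n:ℝ)+3) = W1 (4*(n:ℝ)+3) ∧
    deriv (deriv wfun) (4*(n:ℝ)+3) = W2 (4*(n:ℝ)+3) := by
  set a : ℝ := 4*(n:ℝ)+3 with ha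
  have han : (-3:ℝ) < a := by have : (0:ℝ) ≤ (n:ℝ) := n.cast_nonneg; rw [ha]; linarith
  have hev : ∀ᶠ x in 𝓝 a, (-3:ℝ) < x := eventually_gt_nhds han
  have h0 : wfun =ᶠ[𝓝 a] W0 := hev.mono fun x hx => wfun_eq hx
  have hev1 : ∀ᶠ x in 𝓝 a, HasDerivAt wfun (W1 x) x :=
    evtransfer h0 (hev.mono fun x hx => hW0 hx)
  have d1 : deriv wfun =ᶠ[𝓝 a] W1 := evderiv hev1
  have hev2 : ∀ᶠ x in 𝓝 a, HasDerivAt (deriv wfun) (W2 x) x :=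
    evtransfer d1 (hev.mono fun x hx => hW1 hx)
  have d2 : deriv (deriv wfun) =ᶠ[𝓝 a] W2 := evderiv hev2
  exact ⟨d1.eq_of_nhds, d2.eq_of_nhds⟩

lemma wfun_a (n : ℕ) : wfun (4*(n:ℝ)+3) = (-1:ℝ)^n * Ew (4*(n:ℝ)+3) := by
  rw [wfun_eq (by have : (0:ℝ) ≤ (n:ℝ) := n.cast_nonneg; linarith), sin_a n]

lemma i_val (n : ℕ) :
    deriv wfun (4*(n:ℝ)+3) / wfun (4*(n:ℝ)+3)
      - deriv (deriv ufun) (4*(n:ℝ)+3) / (2 * deriv ufun (4*(n:ℝ)+3))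
      = (ps ((n:ℝ)+3/2) - ps ((n:ℝ)+1)) / 4 := by
  obtain ⟨e1, e2, _⟩ := u_derivs n
  obtain ⟨f1, _⟩ := w_derivs n
  rw [e1, e2, f1, wfun_a n]
  unfold U1 U2 W1
  rw [cos_a n, sin_a n]
  have harg1 : (4*(n:ℝ)+3+1)/4 = (n:ℝ)+1 := by ring
  have harg2 : (4*(n:ℝ)+3+3)/4 = (n:ℝ)+3/2 := by ring
  have hp1v : p1 (4*(n:ℝ)+3) = Real.log 2 / 4 + ps ((n:ℝ)+3/2) / 4 := by unfold p1; rw [harg2]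
  have hg1v : g1 (4*(n:ℝ)+3) = Real.log 2 / 4 + ps ((n:ℝ)+1) / 4 := by unfold g1; rw [harg1]
  rw [hp1v, hg1v]
  have hEu : Eu (4*(n:ℝ)+3) ≠ 0 := Real.exp_ne_zero _
  have hEw : Ew (4*(n:ℝ)+3) ≠ 0 := Real.exp_ne_zero _
  have hs : ((-1:ℝ))^n ≠ 0 := by
    rcases Nat.even_or_odd n with h | h
    · rw [h.neg_one_pow]; norm_num
    · rw [h.neg_one_pow]; norm_num
  have hpi : Real.pi ≠ 0 := Real.pi_ne_zero
  field_simp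
  ring

lemma ii_val (n : ℕ) :
    deriv (deriv wfun) (4*(n:ℝ)+3) / wfun (4*(n:ℝ)+3)
      - (deriv wfun (4*(n:ℝ)+3) / wfun (4*(n:ℝ)+3)) ^ 2 + Real.pi ^ 2 / 16
      = Tg ((n:ℝ)+3/2) / 16 := by
  obtain ⟨f1, f2⟩ := w_derivs n
  rw [f1, f2, wfun_a n]
  unfold W1 W2
  rw [cos_a n, sin_a n]
  have harg2 : (4*(n:ℝ)+3+3)/4 = (n:ℝ)+3/2 := by ring
  have hp2v : p2 (4*(n:ℝ)+3) = Tg ((n:ℝ)+3/2) / 16 := by unfold p2; rw [harg2]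
  rw [← hp2v]
  have hEw : Ew (4*(n:ℝ)+3) ≠ 0 := Real.exp_ne_zero _
  have hs : ((-1:ℝ))^n ≠ 0 := by
    rcases Nat.even_or_odd n with h | h
    · rw [h.neg_one_pow]; norm_num
    · rw [h.neg_one_pow]; norm_num
  field_simp
  ring


/-- Asymptotics of combinations of derivatives of `u` and `w` at `λ = 4n+3`:
(i) `w'/w - u''/(2u') = O(n⁻¹)`, (ii) `w''/w - (w'/w)² + π²/16 = O(n⁻¹)`,
(iii) `u'''/(3u') - (u'')²/(4(u')²) + π²/48 = O(n⁻¹)`. -/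
theorem stmt16 :
    ((fun n : ℕ =>
        deriv wfun (4 * (n : ℝ) + 3) / wfun (4 * (n : ℝ) + 3)
          - deriv (deriv ufun) (4 * (n : ℝ) + 3) / (2 * deriv ufun (4 * (n : ℝ) + 3)))
      =O[atTop] fun n : ℕ => ((n : ℝ))⁻¹) ∧
    ((fun n : ℕ =>
        deriv (deriv wfun) (4 * (n : ℝ) + 3) / wfun (4 * (n : ℝ) + 3)
          - (deriv wfun (4 * (n : ℝ) + 3) / wfun (4 * (n : ℝ) + 3)) ^ 2
          + Real.pi ^ 2 / 16)
      =O[atTop] fun n : ℕ => ((n : ℝ))⁻¹) ∧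
    ((fun n : ℕ =>
        deriv (deriv (deriv ufun)) (4 * (n : ℝ) + 3) / (3 * deriv ufun (4 * (n : ℝ) + 3))
          - (deriv (deriv ufun) (4 * (n : ℝ) + 3)) ^ 2
              / (4 * (deriv ufun (4 * (n : ℝ) + 3)) ^ 2)
          + Real.pi ^ 2 / 48)
      =O[atTop] fun n : ℕ => ((n : ℝ))⁻¹) := by
  refine ⟨?_, ?_, ?_⟩
  · rw [Asymptotics.isBigO_iff]
    refine ⟨1, ?_⟩
    filter_upwards [eventually_ge_atTop 1] with n hn
    have hn1 : (1:ℝ) ≤ (n:ℝ) := by exact_mod_cast hn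
    rw [i_val n]
    have h1 : (0:ℝ) < (n:ℝ) + 1 := by linarith
    have hlo : ps ((n:ℝ)+1) ≤ ps ((n:ℝ)+3/2) :=
      ps_mono (mem_Ioi.mpr (by linarith)) (mem_Ioi.mpr (by linarith)) (by linarith)
    have hhi : ps ((n:ℝ)+3/2) ≤ ps ((n:ℝ)+1) + ((n:ℝ)+1)⁻¹ := by
      have := ps_rec h1
      have hm := ps_mono (mem_Ioi.mpr (show (0:ℝ) < (n:ℝ)+3/2 by linarith))
        (mem_Ioi.mpr (show (0:ℝ) < (n:ℝ)+1+1 by linarith)) (by linarith)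
      linarith
    have hinv : ((n:ℝ)+1)⁻¹ ≤ (n:ℝ)⁻¹ := by
      apply inv_anti₀ (by linarith) (by linarith)
    rw [Real.norm_eq_abs, Real.norm_eq_abs, abs_of_nonneg (by linarith),
      abs_of_nonneg (by positivity : (0:ℝ) ≤ (n:ℝ)⁻¹)]
    linarith
  · rw [Asymptotics.isBigO_iff]
    refine ⟨1, ?_⟩
    filter_upwards [eventually_ge_atTop 1] with n hn
    have hn1 : (1:ℝ) ≤ (n:ℝ) := by exact_mod_cast hn
    rw [ii_val n]
    have h0 : (0:ℝ) < (n:ℝ) + 3/2 := by linarith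
    have hle := Tg_le_inv (show (2:ℝ) ≤ (n:ℝ)+3/2 by linarith)
    have hnn := Tg_nonneg h0
    have hinv : ((n:ℝ)+3/2-1)⁻¹ ≤ (n:ℝ)⁻¹ := by
      apply inv_anti₀ (by linarith) (by linarith)
    rw [Real.norm_eq_abs, Real.norm_eq_abs, abs_of_nonneg (by positivity),
      abs_of_nonneg (by positivity : (0:ℝ) ≤ (n:ℝ)⁻¹)]
    linarith
  · rw [Asymptotics.isBigO_iff]
    refine ⟨1, ?_⟩
    filter_upwards [eventually_ge_atTop 1] with n hn
    have hn1 : (1:ℝ) ≤ (n:ℝ) := by exact_mod_cast hn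
    rw [iii_val n]
    have h0 : (0:ℝ) < (n:ℝ) + 1 := by linarith
    have hle := Tg_le_inv (show (2:ℝ) ≤ (n:ℝ)+1 by linarith)
    have hnn := Tg_nonneg h0
    have hinv : ((n:ℝ)+1-1)⁻¹ ≤ (n:ℝ)⁻¹ := by
      apply inv_anti₀ (by linarith) (by linarith)
    rw [Real.norm_eq_abs, Real.norm_eq_abs, abs_of_nonneg (by positivity),
      abs_of_nonneg (by positivity : (0:ℝ) ≤ (n:ℝ)⁻¹)]
    linarith
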